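/- arXiv:2401.07521 — 2 statements merged into one kernel-verified Lean document; each statement's English description precedes it below -/
import Mathlib

section
/- Error decomposition for classification–restoration prediction (Lemma 1): Under the data model and estimator model below, with the hypothesis that for every x ∈ 𝒳 one has Σ_{m=1}^M p_m(x) v_m(x) = ∫ y dν_x(y), the mean squared prediction error decomposes exactly as E[(ŷ − y)²] = V_p + V_w + V_b + V_y, where the expectation is over the product measure (Σ_x q(x) δ_x ⊗ ν_x) ⊗ 𝒫_p ⊗ 𝒫_w, and V_p = E[(Σ_{m=1}^M (p̂_m(x) − p_m(x)) ŵ_m)²], V_w = E[(Σ_{m=1}^M p_m(x)(ŵ_m − w_m))²], V_b = E_x[(Σ_{m=1}^M p_m(x)(w_m − v_m(x)))²], V_y = E_{(x,y)}[(Σ_{m=1}^M p_m(x) v_m(x) − y)²]. -/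
/-!
For a fixed input, integrate out one variable at a time with the bias–variance identity
`∫ (f - c)² = ∫ (f - ∫ f)² + (∫ f - c)²`, using the unbiasedness of the variable integrated:
over `ŵ` the error becomes `∫ (∑ p̂ₘ (ŵₘ - wₘ))² + (∑ p̂ₘ wₘ - y)²`, over `p̂` the second term
becomes `∫ (∑ (p̂ₘ - pₘ) wₘ)² + (∑ pₘ wₘ - y)²`, and over `y`, whose mean is `∑ pₘ vₘ`, the last
term splits into `V_b + V_y`. The term `∫∫ (∑ p̂ₘ (ŵₘ - wₘ))²` cannot be treated this way since
`p̂` is integrated outside `ŵ`; but its inner integral is a quadratic form in `p̂(ωp)` with Gram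
matrix `∫ (ŵₘ - wₘ)(ŵₙ - wₙ)`, so the covariance identity
`∫ p̂ₘ p̂ₙ = ∫ (p̂ₘ - pₘ)(p̂ₙ - pₙ) + pₘ pₙ` splits it into `∫∫ (∑ (p̂ₘ - pₘ)(ŵₘ - wₘ))² + V_w`.
Centring `ŵ` in the same way splits `V_p` into that term plus `∫ (∑ (p̂ₘ - pₘ) wₘ)²`.
-/

open MeasureTheory ProbabilityTheory

section

variable {α β ι : Type*} {mα : MeasurableSpace α} {mβ : MeasurableSpace β}
  {μ : Measure α} {ν : Measure β}

lemma integral_sub_const_sq [IsProbabilityMeasure μ] {f : α → ℝ} (hf : MemLp f 2 μ) (c : ℝ) :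
    ∫ a, (f a - c) ^ 2 ∂μ = ∫ a, (f a - ∫ b, f b ∂μ) ^ 2 ∂μ + (∫ a, f a ∂μ - c) ^ 2 := by
  have hfc : MemLp (fun a => f a - c) 2 μ := hf.sub (memLp_const c)
  have h := variance_eq_sub hfc
  rw [variance_sub_const hf.1, variance_eq_integral hf.aemeasurable,
    integral_sub (hf.integrable one_le_two) (integrable_const c)] at h
  simp only [Pi.pow_apply, integral_const, probReal_univ, one_smul] at h
  linarith

lemma integral_const_sub_sq [IsProbabilityMeasure μ] {f : α → ℝ} (hf : MemLp f 2 μ) (c : ℝ) :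
    ∫ a, (c - f a) ^ 2 ∂μ = ∫ a, (∫ b, f b ∂μ - f a) ^ 2 ∂μ + (c - ∫ a, f a ∂μ) ^ 2 := by
  have hflip : ∀ d, ∫ a, (d - f a) ^ 2 ∂μ = ∫ a, (f a - d) ^ 2 ∂μ :=
    fun d => integral_congr_ae (.of_forall fun a => sub_sq_comm d (f a))
  rw [hflip, hflip, sub_sq_comm c]
  exact integral_sub_const_sq hf c

lemma integral_sum_mul_sq (s : Finset ι) (c : ι → ℝ) {g : ι → α → ℝ}
    (hg : ∀ i ∈ s, MemLp (g i) 2 μ) :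
    ∫ a, (∑ i ∈ s, c i * g i a) ^ 2 ∂μ = ∑ i ∈ s, ∑ j ∈ s, c i * c j * ∫ a, g i a * g j a ∂μ := by
  have hgg : ∀ i ∈ s, ∀ j ∈ s, Integrable (fun a => g i a * g j a) μ :=
    fun i hi j hj => (hg i hi).integrable_mul (hg j hj)
  simp_rw [sq, Finset.sum_mul_sum, mul_mul_mul_comm _ (g _ _)]
  rw [integral_finsetSum s fun i hi => integrable_finsetSum s fun j hj =>
    (hgg i hi j hj).const_mul _]
  refine Finset.sum_congr rfl fun i hi => ?_
  rw [integral_finsetSum s fun j hj => (hgg i hi j hj).const_mul _]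
  simp_rw [integral_const_mul]

lemma integrable_integral_sum_mul_sq (s : Finset ι) {a : ι → α → ℝ} {g : ι → β → ℝ}
    (ha : ∀ i ∈ s, MemLp (a i) 2 μ) (hg : ∀ i ∈ s, MemLp (g i) 2 ν) :
    Integrable (fun x => ∫ y, (∑ i ∈ s, a i x * g i y) ^ 2 ∂ν) μ := by
  simp_rw [integral_sum_mul_sq s _ hg]
  exact integrable_finsetSum s fun i hi => integrable_finsetSum s fun j hj =>
    ((ha i hi).integrable_mul (ha j hj)).mul_const _

lemma integral_sum_mul_sub_sq [IsProbabilityMeasure μ] (s : Finset ι) (c : ι → ℝ)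
    {g : ι → α → ℝ} {e : ι → ℝ} (hg : ∀ i ∈ s, MemLp (g i) 2 μ)
    (he : ∀ i ∈ s, ∫ a, g i a ∂μ = e i) (y : ℝ) :
    ∫ a, (∑ i ∈ s, c i * g i a - y) ^ 2 ∂μ
      = ∫ a, (∑ i ∈ s, c i * (g i a - e i)) ^ 2 ∂μ + (∑ i ∈ s, c i * e i - y) ^ 2 := by
  have hmean : ∫ a, ∑ i ∈ s, c i * g i a ∂μ = ∑ i ∈ s, c i * e i := by
    rw [integral_finsetSum s fun i hi => ((hg i hi).integrable one_le_two).const_mul _]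
    exact Finset.sum_congr rfl fun i hi => by rw [integral_const_mul, he i hi]
  have hsum : MemLp (fun a => ∑ i ∈ s, c i * g i a) 2 μ :=
    memLp_finsetSum s fun i hi => (hg i hi).const_mul (c i)
  rw [integral_sub_const_sq hsum, hmean]
  simp only [mul_sub, Finset.sum_sub_distrib]

lemma integral_integral_sum_mul_sub_sq [IsFiniteMeasure μ] [IsProbabilityMeasure ν]
    (s : Finset ι) {a : ι → α → ℝ} {g : ι → β → ℝ} {e : ι → ℝ} (ha : ∀ i ∈ s, MemLp (a i) 2 μ)
    (hg : ∀ i ∈ s, MemLp (g i) 2 ν) (he : ∀ i ∈ s, ∫ y, g i y ∂ν = e i) (c : ℝ) :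
    ∫ x, ∫ y, (∑ i ∈ s, a i x * g i y - c) ^ 2 ∂ν ∂μ
      = ∫ x, ∫ y, (∑ i ∈ s, a i x * (g i y - e i)) ^ 2 ∂ν ∂μ
        + ∫ x, (∑ i ∈ s, a i x * e i - c) ^ 2 ∂μ := by
  have hgc : ∀ i ∈ s, MemLp (fun y => g i y - e i) 2 ν :=
    fun i hi => (hg i hi).sub (memLp_const _)
  have hbias : MemLp (fun x => ∑ i ∈ s, a i x * e i - c) 2 μ :=
    (memLp_finsetSum s fun i hi => (ha i hi).mul_const (e i)).sub (memLp_const c)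
  simp only [integral_sum_mul_sub_sq s _ hg he c]
  exact integral_add (integrable_integral_sum_mul_sq s ha hgc) hbias.integrable_sq

lemma integral_integral_sum_mul_sq [IsProbabilityMeasure μ] (s : Finset ι) {a : ι → α → ℝ}
    {p : ι → ℝ} {g : ι → β → ℝ} (ha : ∀ i ∈ s, MemLp (a i) 2 μ)
    (hp : ∀ i ∈ s, ∫ x, a i x ∂μ = p i) (hg : ∀ i ∈ s, MemLp (g i) 2 ν) :
    ∫ x, ∫ y, (∑ i ∈ s, a i x * g i y) ^ 2 ∂ν ∂μ
      = ∫ x, ∫ y, (∑ i ∈ s, (a i x - p i) * g i y) ^ 2 ∂ν ∂μ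
        + ∫ y, (∑ i ∈ s, p i * g i y) ^ 2 ∂ν := by
  have ha' : ∀ i ∈ s, MemLp (fun x => a i x - p i) 2 μ :=
    fun i hi => (ha i hi).sub (memLp_const _)
  have hquad : ∀ {b : ι → α → ℝ}, (∀ i ∈ s, MemLp (b i) 2 μ) → ∫ x, ∑ i ∈ s, ∑ j ∈ s,
      b i x * b j x * ∫ y, g i y * g j y ∂ν ∂μ
        = ∑ i ∈ s, ∑ j ∈ s, (∫ x, b i x * b j x ∂μ) * ∫ y, g i y * g j y ∂ν := by
    intro b hb
    have hbb : ∀ i ∈ s, ∀ j ∈ s, Integrable (fun x => b i x * b j x) μ :=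
      fun i hi j hj => (hb i hi).integrable_mul (hb j hj)
    rw [integral_finsetSum s fun i hi => integrable_finsetSum s fun j hj =>
      (hbb i hi j hj).mul_const _]
    refine Finset.sum_congr rfl fun i hi => ?_
    rw [integral_finsetSum s fun j hj => (hbb i hi j hj).mul_const _]
    simp_rw [integral_mul_const]
  simp_rw [integral_sum_mul_sq s _ hg]
  rw [hquad ha, hquad ha', ← Finset.sum_add_distrib]
  refine Finset.sum_congr rfl fun i hi => ?_
  rw [← Finset.sum_add_distrib]
  refine Finset.sum_congr rfl fun j hj => ?_
  have hcov := covariance_eq_sub (ha i hi) (ha j hj)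
  rw [covariance, hp i hi, hp j hj] at hcov
  rw [hcov]
  simp only [Pi.mul_apply]
  ring

theorem integral_sq_prediction_error {Ωp Ωw : Type*} {mΩp : MeasurableSpace Ωp}
    {mΩw : MeasurableSpace Ωw} {Pp : Measure Ωp} {Pw : Measure Ωw} [IsProbabilityMeasure Pp]
    [IsProbabilityMeasure Pw] {ν : Measure ℝ} [IsProbabilityMeasure ν]
    (hν : MemLp (fun y => y) 2 ν) (s : Finset ι) {p v w : ι → ℝ}
    {phat : ι → Ωp → ℝ} {what : ι → Ωw → ℝ}
    (hpL2 : ∀ i ∈ s, MemLp (phat i) 2 Pp) (hwL2 : ∀ i ∈ s, MemLp (what i) 2 Pw)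
    (hpu : ∀ i ∈ s, ∫ ω, phat i ω ∂Pp = p i) (hwu : ∀ i ∈ s, ∫ ω, what i ω ∂Pw = w i)
    (hmatch : ∑ i ∈ s, p i * v i = ∫ y, y ∂ν) :
    ∫ y, ∫ ωp, ∫ ωw, (∑ i ∈ s, phat i ωp * what i ωw - y) ^ 2 ∂Pw ∂Pp ∂ν
      = ∫ ωp, ∫ ωw, (∑ i ∈ s, (phat i ωp - p i) * what i ωw) ^ 2 ∂Pw ∂Pp
        + ∫ ωw, (∑ i ∈ s, p i * (what i ωw - w i)) ^ 2 ∂Pw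
        + (∑ i ∈ s, p i * (w i - v i)) ^ 2
        + ∫ y, (∑ i ∈ s, p i * v i - y) ^ 2 ∂ν := by
  have hpc : ∀ i ∈ s, MemLp (fun ω => phat i ω - p i) 2 Pp :=
    fun i hi => (hpL2 i hi).sub (memLp_const _)
  have hwc : ∀ i ∈ s, MemLp (fun ω => what i ω - w i) 2 Pw :=
    fun i hi => (hwL2 i hi).sub (memLp_const _)
  set K := ∫ ωp, ∫ ωw, (∑ i ∈ s, phat i ωp * (what i ωw - w i)) ^ 2 ∂Pw ∂Pp
  set B := ∫ ωp, (∑ i ∈ s, (phat i ωp - p i) * w i) ^ 2 ∂Pp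
  have hphat : ∀ y, ∫ ωp, (∑ i ∈ s, phat i ωp * w i - y) ^ 2 ∂Pp
      = B + (∑ i ∈ s, p i * w i - y) ^ 2 := fun y => by
    simpa only [mul_comm (w _)] using integral_sum_mul_sub_sq s w hpL2 hpu y
  have hVp : ∫ ωp, ∫ ωw, (∑ i ∈ s, (phat i ωp - p i) * what i ωw) ^ 2 ∂Pw ∂Pp
      = ∫ ωp, ∫ ωw, (∑ i ∈ s, (phat i ωp - p i) * (what i ωw - w i)) ^ 2 ∂Pw ∂Pp + B := by
    simpa only [sub_zero] using integral_integral_sum_mul_sub_sq s hpc hwL2 hwu 0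
  have hK : K = ∫ ωp, ∫ ωw, (∑ i ∈ s, (phat i ωp - p i) * (what i ωw - w i)) ^ 2 ∂Pw ∂Pp
      + ∫ ωw, (∑ i ∈ s, p i * (what i ωw - w i)) ^ 2 ∂Pw :=
    integral_integral_sum_mul_sq s hpL2 hpu hwc
  have hy : ∫ y, (∑ i ∈ s, p i * w i - y) ^ 2 ∂ν
      = (∑ i ∈ s, p i * (w i - v i)) ^ 2 + ∫ y, (∑ i ∈ s, p i * v i - y) ^ 2 ∂ν := by
    rw [integral_const_sub_sq hν, ← hmatch, add_comm]
    simp only [mul_sub, Finset.sum_sub_distrib]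
  have hyc : Integrable (fun y => (∑ i ∈ s, p i * w i - y) ^ 2) ν :=
    ((memLp_const _).sub hν).integrable_sq
  calc ∫ y, ∫ ωp, ∫ ωw, (∑ i ∈ s, phat i ωp * what i ωw - y) ^ 2 ∂Pw ∂Pp ∂ν
      = ∫ y, (K + B + (∑ i ∈ s, p i * w i - y) ^ 2) ∂ν := by
        refine integral_congr_ae (.of_forall fun y => ?_)
        dsimp only
        rw [integral_integral_sum_mul_sub_sq s hpL2 hwL2 hwu y, hphat, add_assoc]
    _ = K + B + ∫ y, (∑ i ∈ s, p i * w i - y) ^ 2 ∂ν := by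
        rw [integral_add (integrable_const _) hyc, integral_const, probReal_univ, one_smul]
    _ = _ := by rw [hy, hK, hVp]; ring

end

theorem error_decomposition_general
    {X : Type*} [Fintype X]
    (M : ℕ)
    (q : X → ℝ)
    (ν : X → Measure ℝ) (hν : ∀ x, IsProbabilityMeasure (ν x))
    (hmom2 : ∀ x, Integrable (fun y => y ^ 2) (ν x))
    (p : ℕ → X → ℝ)
    (v : ℕ → X → ℝ)
    (w : ℕ → ℝ)
    {Ωp Ωw : Type*} [MeasurableSpace Ωp] [MeasurableSpace Ωw]
    (Pp : Measure Ωp) (Pw : Measure Ωw)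
    [IsProbabilityMeasure Pp] [IsProbabilityMeasure Pw]
    (phat : ℕ → X → Ωp → ℝ) (what : ℕ → Ωw → ℝ)
    (hphatL2 : ∀ m ∈ Finset.Icc 1 M, ∀ x, MemLp (phat m x) 2 Pp)
    (hwhatL2 : ∀ m ∈ Finset.Icc 1 M, MemLp (what m) 2 Pw)
    (hphat_unbiased : ∀ m ∈ Finset.Icc 1 M, ∀ x, ∫ ωp, phat m x ωp ∂Pp = p m x)
    (hwhat_unbiased : ∀ m ∈ Finset.Icc 1 M, ∫ ωw, what m ωw ∂Pw = w m)
    (hmatch : ∀ x, ∑ m ∈ Finset.Icc 1 M, p m x * v m x = ∫ y, y ∂(ν x)) :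
    -- E[(ŷ − y)²]
    (∑ x, q x * ∫ y, ∫ ωp, ∫ ωw,
        ((∑ m ∈ Finset.Icc 1 M, phat m x ωp * what m ωw) - y) ^ 2 ∂Pw ∂Pp ∂(ν x))
      = -- V_p
        (∑ x, q x * ∫ ωp, ∫ ωw,
            (∑ m ∈ Finset.Icc 1 M, (phat m x ωp - p m x) * what m ωw) ^ 2 ∂Pw ∂Pp)
      + -- V_w
        (∑ x, q x * ∫ ωw,
            (∑ m ∈ Finset.Icc 1 M, p m x * (what m ωw - w m)) ^ 2 ∂Pw)
      + -- V_b
        (∑ x, q x * (∑ m ∈ Finset.Icc 1 M, p m x * (w m - v m x)) ^ 2)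
      + -- V_y
        (∑ x, q x * ∫ y, ((∑ m ∈ Finset.Icc 1 M, p m x * v m x) - y) ^ 2 ∂(ν x)) := by
  simp only [← Finset.sum_add_distrib]
  refine Finset.sum_congr rfl fun x _ => ?_
  have := hν x
  have hy : MemLp (fun y => y) 2 (ν x) :=
    (memLp_two_iff_integrable_sq aestronglyMeasurable_id).2 (hmom2 x)
  rw [integral_sq_prediction_error hy (Finset.Icc 1 M) (fun m hm => hphatL2 m hm x) hwhatL2
    (fun m hm => hphat_unbiased m hm x) hwhat_unbiased (hmatch x)]
  ring

/-- Error decomposition for classification–restoration prediction (Lemma 1):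
for a finite nonempty input set `X` with probability weights `q`, conditional watch-time
laws `ν x` (Borel probability measures on `ℝ` with finite second moment), bucket
probabilities `p m x ∈ [0,1]` and conditional bucket means `v m x` with population
averages `w m = ∑ x, q x * v m x`, and unbiased square-integrable estimators
`p̂ m x : Ω_p → ℝ` and `ŵ m : Ω_w → ℝ` on probability spaces `(Ω_p, 𝒫_p)` and
`(Ω_w, 𝒫_w)`, if `∑ m, p m x * v m x = ∫ y dν_x(y)` for every `x`, then the mean
squared error of the prediction `ŷ = ∑ m, p̂ m x * ŵ m` decomposes exactly as
`E[(ŷ − y)²] = V_p + V_w + V_b + V_y`, the expectation being over the product measure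
`(∑_x q x δ_x ⊗ ν_x) ⊗ 𝒫_p ⊗ 𝒫_w` (written here via sums over `x` and iterated
integrals). -/
theorem error_decomposition
    {X : Type*} [Fintype X] [Nonempty X]
    (M : ℕ) (hM : 1 ≤ M)
    (q : X → ℝ) (hq0 : ∀ x, 0 ≤ q x) (hq1 : ∀ x, q x ≤ 1)
    (hqsum : ∑ x, q x = 1)
    (ν : X → Measure ℝ) (hν : ∀ x, IsProbabilityMeasure (ν x))
    (hmom2 : ∀ x, Integrable (fun y => y ^ 2) (ν x))
    (p : ℕ → X → ℝ) (hp0 : ∀ m x, 0 ≤ p m x) (hp1 : ∀ m x, p m x ≤ 1)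
    (v : ℕ → X → ℝ)
    (w : ℕ → ℝ) (hw : ∀ m ∈ Finset.Icc 1 M, w m = ∑ x, q x * v m x)
    {Ωp Ωw : Type*} [MeasurableSpace Ωp] [MeasurableSpace Ωw]
    (Pp : Measure Ωp) (Pw : Measure Ωw)
    [IsProbabilityMeasure Pp] [IsProbabilityMeasure Pw]
    (phat : ℕ → X → Ωp → ℝ) (what : ℕ → Ωw → ℝ)
    (hphatL2 : ∀ m ∈ Finset.Icc 1 M, ∀ x, MemLp (phat m x) 2 Pp)
    (hwhatL2 : ∀ m ∈ Finset.Icc 1 M, MemLp (what m) 2 Pw)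
    (hphat_unbiased : ∀ m ∈ Finset.Icc 1 M, ∀ x, ∫ ωp, phat m x ωp ∂Pp = p m x)
    (hwhat_unbiased : ∀ m ∈ Finset.Icc 1 M, ∫ ωw, what m ωw ∂Pw = w m)
    (hmatch : ∀ x, ∑ m ∈ Finset.Icc 1 M, p m x * v m x = ∫ y, y ∂(ν x)) :
    -- E[(ŷ − y)²]
    (∑ x, q x * ∫ y, ∫ ωp, ∫ ωw,
        ((∑ m ∈ Finset.Icc 1 M, phat m x ωp * what m ωw) - y) ^ 2 ∂Pw ∂Pp ∂(ν x))
      = -- V_p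
        (∑ x, q x * ∫ ωp, ∫ ωw,
            (∑ m ∈ Finset.Icc 1 M, (phat m x ωp - p m x) * what m ωw) ^ 2 ∂Pw ∂Pp)
      + -- V_w
        (∑ x, q x * ∫ ωw,
            (∑ m ∈ Finset.Icc 1 M, p m x * (what m ωw - w m)) ^ 2 ∂Pw)
      + -- V_b
        (∑ x, q x * (∑ m ∈ Finset.Icc 1 M, p m x * (w m - v m x)) ^ 2)
      + -- V_y
        (∑ x, q x * ∫ y, ((∑ m ∈ Finset.Icc 1 M, p m x * v m x) - y) ^ 2 ∂(ν x)) :=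
  error_decomposition_general M q ν hν hmom2 p v w Pp Pw phat what hphatL2 hwhatL2 hphat_unbiased
    hwhat_unbiased hmatch
end

section
/- Bound on the probability-learning error V_p (first bound of Theorem 1, intermediate form): under the data model below, let N ≥ 1 and for each x ∈ 𝒳 let N_x ≥ 1 be integers with q(x) = N_x / N. Suppose p̂_m(x) : Ω_p → ℝ are square-integrable random variables on a probability space (Ω_p, 𝒫_p) satisfying E[(p̂_m(x) − p_m(x))²] ≤ p_m(x)/N_x for every m, x, and ŵ_m : Ω_w → ℝ are random variables on a probability space (Ω_w, 𝒫_w) satisfying |ŵ_m(ω)| ≤ t_m for all ω and all m. Then V_p := E[(Σ_{m=1}^M (p̂_m(x) − p_m(x)) ŵ_m)²] ≤ (M/N) · Σ_{m=1}^M t_m² Σ_{x ∈ 𝒳} p_m(x), where the expectation is over x drawn with weights q, ω_p ~ 𝒫_p, and ω_w ~ 𝒫_w independently. -/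
open MeasureTheory Finset

/-! The error is a double integral over two independent sources of randomness. For fixed
estimation noise, Cauchy–Schwarz over the `M` buckets and `|ŵ m| ≤ t m` bound the integrand
uniformly in `ω_w`, so the inner integral is at most `M ∑ₘ t m² (p̂ m x − p m x)²`. Integrating
in `ω_p` turns the squared errors into mean squared errors `≤ p m x / N_x`, and averaging over
`x` with weights `q x = N_x / N` cancels `N_x` against `N`. -/

section

variable {ι : Type*} (s : Finset ι)

theorem sq_sum_mul_le_card_mul_sum_sq_mul_sq {a w c : ι → ℝ} (hw : ∀ i ∈ s, |w i| ≤ c i) :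
    (∑ i ∈ s, a i * w i) ^ 2 ≤ #s * ∑ i ∈ s, a i ^ 2 * c i ^ 2 := by
  calc (∑ i ∈ s, a i * w i) ^ 2
      ≤ #s * ∑ i ∈ s, (a i * w i) ^ 2 := sq_sum_le_card_mul_sum_sq
    _ ≤ #s * ∑ i ∈ s, a i ^ 2 * c i ^ 2 := by
      gcongr with i hi
      rw [mul_pow]
      exact mul_le_mul_of_nonneg_left (sq_le_sq.mpr ((hw i hi).trans (le_abs_self _)))
        (sq_nonneg _)

variable {Ω Ω' : Type*} [MeasurableSpace Ω] [MeasurableSpace Ω']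

theorem integral_le_of_forall_le_of_nonneg (ν : Measure Ω') [IsProbabilityMeasure ν]
    {f : Ω' → ℝ} {C : ℝ} (hf0 : ∀ ω, 0 ≤ f ω) (hfC : ∀ ω, f ω ≤ C) : ∫ ω, f ω ∂ν ≤ C :=
  calc ∫ ω, f ω ∂ν ≤ ∫ _, C ∂ν :=
        integral_mono_of_nonneg (.of_forall hf0) (integrable_const C) (.of_forall hfC)
    _ = C := by simp

theorem integral_integral_sq_sum_mul_le (μ : Measure Ω) (ν : Measure Ω') [IsProbabilityMeasure ν]
    {e : ι → Ω → ℝ} {w : ι → Ω' → ℝ} {c : ι → ℝ}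
    (he : ∀ i ∈ s, Integrable (fun ω => e i ω ^ 2) μ) (hw : ∀ i ∈ s, ∀ ω', |w i ω'| ≤ c i) :
    ∫ ω, ∫ ω', (∑ i ∈ s, e i ω * w i ω') ^ 2 ∂ν ∂μ
      ≤ #s * ∑ i ∈ s, c i ^ 2 * ∫ ω, e i ω ^ 2 ∂μ := by
  have hsum : ∀ i ∈ s, Integrable (fun ω => e i ω ^ 2 * c i ^ 2) μ :=
    fun i hi => (he i hi).mul_const _
  calc ∫ ω, ∫ ω', (∑ i ∈ s, e i ω * w i ω') ^ 2 ∂ν ∂μ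
      ≤ ∫ ω, (#s : ℝ) * ∑ i ∈ s, e i ω ^ 2 * c i ^ 2 ∂μ := by
        refine integral_mono_of_nonneg (.of_forall fun ω => integral_nonneg fun _ => sq_nonneg _)
          ((integrable_finsetSum _ hsum).const_mul _) (.of_forall fun ω => ?_)
        exact integral_le_of_forall_le_of_nonneg ν (fun _ => sq_nonneg _)
          fun ω' => sq_sum_mul_le_card_mul_sum_sq_mul_sq s fun i hi => hw i hi ω'
    _ = #s * ∑ i ∈ s, c i ^ 2 * ∫ ω, e i ω ^ 2 ∂μ := by
        rw [integral_const_mul, integral_finsetSum _ hsum]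
        simp only [integral_mul_const, mul_comm]

end

theorem probability_learning_error_bound_general
    {X : Type*} [Fintype X]
    (M : ℕ) (t : ℕ → ℝ)
    (N : ℕ) (Nx : X → ℕ) (hNx : ∀ x, 1 ≤ Nx x)
    (q : X → ℝ) (hq : ∀ x, q x = (Nx x : ℝ) / N)
    (p : ℕ → X → ℝ)
    {Ωp Ωw : Type*} [MeasurableSpace Ωp] [MeasurableSpace Ωw]
    (Pp : Measure Ωp) (Pw : Measure Ωw)
    [IsProbabilityMeasure Pp] [IsProbabilityMeasure Pw]
    (phat : ℕ → X → Ωp → ℝ) (what : ℕ → Ωw → ℝ)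
    (hphatL2 : ∀ m ∈ Finset.Icc 1 M, ∀ x, MemLp (phat m x) 2 Pp)
    (hmse : ∀ m ∈ Finset.Icc 1 M, ∀ x,
      ∫ ωp, (phat m x ωp - p m x) ^ 2 ∂Pp ≤ p m x / Nx x)
    (hwbound : ∀ m ∈ Finset.Icc 1 M, ∀ ωw, |what m ωw| ≤ t m) :
    ∑ x, q x * ∫ ωp, ∫ ωw,
        (∑ m ∈ Finset.Icc 1 M, (phat m x ωp - p m x) * what m ωw) ^ 2 ∂Pw ∂Pp
      ≤ ((M : ℝ) / N) * ∑ m ∈ Finset.Icc 1 M, (t m) ^ 2 * ∑ x, p m x := by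
  have herror : ∀ x, ∫ ωp, ∫ ωw,
      (∑ m ∈ Icc 1 M, (phat m x ωp - p m x) * what m ωw) ^ 2 ∂Pw ∂Pp
        ≤ M * ∑ m ∈ Icc 1 M, t m ^ 2 * (p m x / Nx x) := by
    intro x
    calc _ ≤ #(Icc 1 M) * ∑ m ∈ Icc 1 M, t m ^ 2 * ∫ ωp, (phat m x ωp - p m x) ^ 2 ∂Pp :=
          integral_integral_sq_sum_mul_le _ Pp Pw
            (fun m hm => ((hphatL2 m hm x).sub (memLp_const _)).integrable_sq) hwbound
      _ ≤ M * ∑ m ∈ Icc 1 M, t m ^ 2 * (p m x / Nx x) := by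
          rw [Nat.card_Icc, Nat.add_sub_cancel]
          gcongr with m hm
          exact hmse m hm x
  have hweight : ∀ m x, q x * (p m x / Nx x) = p m x / N := fun m x => by
    have : (Nx x : ℝ) ≠ 0 := by have := hNx x; positivity
    rw [hq]; field_simp
  calc _ ≤ ∑ x, q x * (M * ∑ m ∈ Icc 1 M, t m ^ 2 * (p m x / Nx x)) :=
        sum_le_sum fun x _ => mul_le_mul_of_nonneg_left (herror x) (by rw [hq]; positivity)
    _ = ((M : ℝ) / N) * ∑ m ∈ Icc 1 M, t m ^ 2 * ∑ x, p m x := by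
        simp only [mul_sum]
        rw [sum_comm]
        refine sum_congr rfl fun m _ => sum_congr rfl fun x _ => ?_
        linear_combination (M * t m ^ 2) * hweight m x

/-- Bound on the probability-learning error `V_p` (first bound of Theorem 1,
intermediate form): with thresholds `0 = t 0 < t 1 < … < t M`, a finite nonempty input
set `X` with probability weights `q x = N_x / N` (`N ≥ 1`, `N_x ≥ 1` integers), bucket
probabilities `p m x ∈ [0,1]`, square-integrable estimators `p̂ m x` on `(Ω_p, 𝒫_p)`
with `E[(p̂ m x − p m x)²] ≤ p m x / N_x`, and estimators `ŵ m` on `(Ω_w, 𝒫_w)` with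
`|ŵ m ω| ≤ t m` everywhere, the error
`V_p = E[(∑_{m=1}^M (p̂ m x − p m x) ŵ m)²]` (expectation over `x ∼ q`,
`ω_p ∼ 𝒫_p`, `ω_w ∼ 𝒫_w` independently) is at most
`(M/N) * ∑_{m=1}^M (t m)² * ∑_x p m x`. -/
theorem probability_learning_error_bound
    {X : Type*} [Fintype X] [Nonempty X]
    (M : ℕ) (hM : 1 ≤ M) (Tmax : ℝ) (t : ℕ → ℝ)
    (ht0 : t 0 = 0) (htM : t M = Tmax)
    (htmono : ∀ m < M, t m < t (m + 1))
    (N : ℕ) (hN : 1 ≤ N) (Nx : X → ℕ) (hNx : ∀ x, 1 ≤ Nx x)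
    (q : X → ℝ) (hq : ∀ x, q x = (Nx x : ℝ) / N)
    (hqsum : ∑ x, q x = 1)
    (p : ℕ → X → ℝ) (hp0 : ∀ m x, 0 ≤ p m x) (hp1 : ∀ m x, p m x ≤ 1)
    {Ωp Ωw : Type*} [MeasurableSpace Ωp] [MeasurableSpace Ωw]
    (Pp : Measure Ωp) (Pw : Measure Ωw)
    [IsProbabilityMeasure Pp] [IsProbabilityMeasure Pw]
    (phat : ℕ → X → Ωp → ℝ) (what : ℕ → Ωw → ℝ)
    (hphatL2 : ∀ m ∈ Finset.Icc 1 M, ∀ x, MemLp (phat m x) 2 Pp)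
    (hwhat_meas : ∀ m ∈ Finset.Icc 1 M, Measurable (what m))
    (hmse : ∀ m ∈ Finset.Icc 1 M, ∀ x,
      ∫ ωp, (phat m x ωp - p m x) ^ 2 ∂Pp ≤ p m x / Nx x)
    (hwbound : ∀ m ∈ Finset.Icc 1 M, ∀ ωw, |what m ωw| ≤ t m) :
    ∑ x, q x * ∫ ωp, ∫ ωw,
        (∑ m ∈ Finset.Icc 1 M, (phat m x ωp - p m x) * what m ωw) ^ 2 ∂Pw ∂Pp
      ≤ ((M : ℝ) / N) * ∑ m ∈ Finset.Icc 1 M, (t m) ^ 2 * ∑ x, p m x :=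
  probability_learning_error_bound_general M t N Nx hNx q hq p Pp Pw phat what hphatL2 hmse hwbound
end
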